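/- Let H ≤ G be groups with [G : H] finite, and let M be a representation of H over a commutative ring k. Then the first group cohomology of G with coefficients in the coinduced representation Coind_H^G M is naturally isomorphic to the first group cohomology of H with coefficients in M (Shapiro's lemma in degree 1). -/

import Mathlib

variable {k G M : Type} [CommRing k] [Group G] {H : Subgroup G}
  [AddCommGroup M] [Module k M]

/-- The underlying module of the coinduced representation `Coind_H^G M`:
`H`-equivariant functions `G → M`, i.e. `Hom_{k[H]}(k[G], M)`. -/
def coindCarrier (ρ : Representation k H M) : Submodule k (G → M) where
  carrier := {f | ∀ (h : H) (g : G), f ((h : G) * g) = ρ h (f g)}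
  add_mem' := by
    intro a b ha hb h g
    simp [ha h g, hb h g]
  zero_mem' := by intro h g; simp
  smul_mem' := by
    intro c f hf h g
    simp [hf h g]

/-- The coinduced representation of `ρ` from `H` to `G`: `G` acts on
`H`-equivariant functions `G → M` by right translation. -/
def coindRep (ρ : Representation k H M) : Representation k G (coindCarrier ρ) where
  toFun g :=
    { toFun := fun f => ⟨fun x => (f : G → M) (x * g), by
        intro h x
        show (f : G → M) ((h : G) * x * g) = ρ h ((f : G → M) (x * g))
        rw [mul_assoc]
        exact f.2 h (x * g)⟩
      map_add' := by intro a b; ext x; rfl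
      map_smul' := by intro c f; ext x; rfl }
  map_one' := by
    ext f x
    simp
  map_mul' := by
    intro g₁ g₂
    ext f x
    simp [mul_assoc]

theorem coindCarrier_eq_coindV (ρ : Representation k H M) :
    coindCarrier ρ = Representation.coindV H.subtype ρ :=
  rfl

def coindRepEquivCoind (ρ : Representation k H M) :
    (coindRep ρ).Equiv (Representation.coind H.subtype ρ) :=
  .mk (LinearEquiv.ofEq _ _ (coindCarrier_eq_coindV ρ)) fun _ => rfl

theorem stmt_17_general (H : Subgroup G) (ρ : Representation k H M) :
    Nonempty (groupCohomology (Rep.of (coindRep ρ)) 1 ≅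
      groupCohomology (Rep.of ρ) 1) :=
  ⟨(groupCohomology.functor k G 1).mapIso (Rep.mkIso (coindRepEquivCoind ρ)) ≪≫
    groupCohomology.coindIso (Rep.of ρ) 1⟩

/-- Shapiro's lemma in degree 1: for `H ≤ G` of finite index and a
representation `M` of `H`, the first group cohomology of `G` with coefficients
in `Coind_H^G M` is isomorphic to the first group cohomology of `H` with
coefficients in `M`. -/
theorem stmt_17 (H : Subgroup G) [H.FiniteIndex] (ρ : Representation k H M) :
    Nonempty (groupCohomology (Rep.of (coindRep ρ)) 1 ≅
      groupCohomology (Rep.of ρ) 1) :=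
  stmt_17_general H ρ
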